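/- Fix c > 0. There exists a constant L > 0, depending only on c, such that the operator A is L-Lipschitz on 𝓛_c with respect to the L¹ norm: for all f₁, f₂ ∈ 𝓛_c, ∫_ℝ |A(f₁)(x) − A(f₂)(x)| dx ≤ L·∫_ℝ |f₁(x) − f₂(x)| dx. -/

import Mathlib

open MeasureTheory
open scoped Convolution

noncomputable def cnv (g h : ℝ → ℝ) : ℝ → ℝ := g ⋆[ContinuousLinearMap.mul ℝ ℝ] h

lemma cnv_apply (g h : ℝ → ℝ) (x : ℝ) : cnv g h x = ∫ t, g t * h (x - t) := by
  simp [cnv, convolution, ContinuousLinearMap.mul_apply']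

lemma cnv_integrable {g h : ℝ → ℝ} (hg : Integrable g) (hh : Integrable h) :
    Integrable (cnv g h) :=
  hg.integrable_convolution (ContinuousLinearMap.mul ℝ ℝ) hh

lemma aeConv {g h : ℝ → ℝ} (hg : Integrable g) (hh : Integrable h) :
    ∀ᵐ x : ℝ, Integrable (fun t => g t * h (x - t)) := by
  filter_upwards [hg.ae_convolution_exists (L := ContinuousLinearMap.mul ℝ ℝ) hh] with x hx
  simpa [ConvolutionExistsAt, ContinuousLinearMap.mul_apply'] using hx

lemma cnv_l1 {g h : ℝ → ℝ} (hg : Integrable g) (hh : Integrable h) :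
    ∫ x, |cnv g h x| ≤ (∫ x, |g x|) * ∫ x, |h x| := by
  have hga : Integrable (fun x => |g x|) := hg.abs
  have hha : Integrable (fun x => |h x|) := hh.abs
  have h1 : ∀ x, |cnv g h x| ≤ cnv (fun y => |g y|) (fun y => |h y|) x := by
    intro x
    rw [cnv_apply, cnv_apply]
    simpa [Real.norm_eq_abs, abs_mul] using
      norm_integral_le_integral_norm (μ := volume) (fun t => g t * h (x - t))
  have h2 : ∫ x, |cnv g h x| ≤ ∫ x, cnv (fun y => |g y|) (fun y => |h y|) x :=
    integral_mono (cnv_integrable hg hh).abs (cnv_integrable hga hha) h1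
  refine h2.trans_eq ?_
  have := integral_convolution (μ := volume) (ν := volume)
    (ContinuousLinearMap.mul ℝ ℝ) hga hha
  simpa [cnv, ContinuousLinearMap.mul_apply'] using this

lemma cnv_zero_of_neg {g h : ℝ → ℝ} (hg : ∀ t, t < 0 → g t = 0)
    (hh : ∀ t, t < 0 → h t = 0) {x : ℝ} (hx : x < 0) : cnv g h x = 0 := by
  rw [cnv_apply]
  have : (fun t => g t * h (x - t)) = fun _ => (0 : ℝ) := by
    funext t
    rcases lt_or_ge t 0 with ht | ht
    · simp [hg t ht]
    · simp [hh (x - t) (by linarith)]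
  rw [this, integral_zero]

lemma int_abs_add6 {t1 t2 t3 t4 t5 t6 : ℝ → ℝ} (h1 : Integrable t1) (h2 : Integrable t2)
    (h3 : Integrable t3) (h4 : Integrable t4) (h5 : Integrable t5) (h6 : Integrable t6) :
    ∫ x, |t1 x + t2 x + t3 x + t4 x + t5 x + t6 x| ≤
      (∫ x, |t1 x|) + (∫ x, |t2 x|) + (∫ x, |t3 x|) + (∫ x, |t4 x|) + (∫ x, |t5 x|) +
        (∫ x, |t6 x|) := by
  have i2 : Integrable (fun x => t1 x + t2 x) := h1.add h2
  have i3 : Integrable (fun x => t1 x + t2 x + t3 x) := i2.add h3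
  have i4 : Integrable (fun x => t1 x + t2 x + t3 x + t4 x) := i3.add h4
  have i5 : Integrable (fun x => t1 x + t2 x + t3 x + t4 x + t5 x) := i4.add h5
  have e2 : ∫ x, |t1 x + t2 x| ≤ (∫ x, |t1 x|) + ∫ x, |t2 x| := by
    calc ∫ x, |t1 x + t2 x| ≤ ∫ x, (|t1 x| + |t2 x|) :=
          integral_mono i2.abs (h1.abs.add h2.abs) (fun x => abs_add_le _ _)
      _ = (∫ x, |t1 x|) + ∫ x, |t2 x| := integral_add h1.abs h2.abs
  have e3 : ∫ x, |t1 x + t2 x + t3 x| ≤ (∫ x, |t1 x + t2 x|) + ∫ x, |t3 x| := by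
    calc ∫ x, |t1 x + t2 x + t3 x| ≤ ∫ x, (|t1 x + t2 x| + |t3 x|) :=
          integral_mono i3.abs (i2.abs.add h3.abs) (fun x => abs_add_le _ _)
      _ = _ := integral_add i2.abs h3.abs
  have e4 : ∫ x, |t1 x + t2 x + t3 x + t4 x| ≤ (∫ x, |t1 x + t2 x + t3 x|) + ∫ x, |t4 x| := by
    calc ∫ x, |t1 x + t2 x + t3 x + t4 x| ≤ ∫ x, (|t1 x + t2 x + t3 x| + |t4 x|) :=
          integral_mono i4.abs (i3.abs.add h4.abs) (fun x => abs_add_le _ _)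
      _ = _ := integral_add i3.abs h4.abs
  have e5 : ∫ x, |t1 x + t2 x + t3 x + t4 x + t5 x| ≤
      (∫ x, |t1 x + t2 x + t3 x + t4 x|) + ∫ x, |t5 x| := by
    calc ∫ x, |t1 x + t2 x + t3 x + t4 x + t5 x| ≤
        ∫ x, (|t1 x + t2 x + t3 x + t4 x| + |t5 x|) :=
          integral_mono i5.abs (i4.abs.add h5.abs) (fun x => abs_add_le _ _)
      _ = _ := integral_add i4.abs h5.abs
  have e6 : ∫ x, |t1 x + t2 x + t3 x + t4 x + t5 x + t6 x| ≤
      (∫ x, |t1 x + t2 x + t3 x + t4 x + t5 x|) + ∫ x, |t6 x| := by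
    calc ∫ x, |t1 x + t2 x + t3 x + t4 x + t5 x + t6 x| ≤
        ∫ x, (|t1 x + t2 x + t3 x + t4 x + t5 x| + |t6 x|) :=
          integral_mono (i5.add h6).abs (i5.abs.add h6.abs) (fun x => abs_add_le _ _)
      _ = _ := integral_add i5.abs h6.abs
  linarith

/-- The class `𝓛_c`: integrable functions vanishing on `(-∞, 0)`, nonnegative a.e.,
with `e^{-4c} ≤ ∫₀^∞ f ≤ 1`. -/
def memLc (c : ℝ) (f : ℝ → ℝ) : Prop :=
  Integrable f ∧ (∀ x, x < 0 → f x = 0) ∧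
  (∀ᵐ x ∂(volume : Measure ℝ), 0 ≤ f x) ∧
  Real.exp (-(4 * c)) ≤ (∫ x in Set.Ioi (0 : ℝ), f x) ∧
  (∫ x in Set.Ioi (0 : ℝ), f x) ≤ 1

/-- The operator `A` from the max-matching PDE. -/
noncomputable def Aop (c : ℝ) (f : ℝ → ℝ) (x : ℝ) : ℝ :=
  if x < 0 then 0
  else
    -(min x (2 * c)) * f x
      - ((∫ x' in Set.Ioi (0 : ℝ), min x' (2 * c) * f x') /
          (∫ x' in Set.Ioi (0 : ℝ), f x')) * f x
      + (∫ x' in (0 : ℝ)..x, min x' (2 * c) * f x' * f (x - x')) /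
          (∫ x' in Set.Ioi (0 : ℝ), f x')

set_option maxHeartbeats 2000000 in
/-- The operator `A` is Lipschitz on `𝓛_c` for the `L¹` norm, with a constant
depending only on `c`. -/
theorem stmt11 (c : ℝ) (hc : 0 < c) :
    ∃ L : ℝ, 0 < L ∧
      ∀ f₁, memLc c f₁ → ∀ f₂, memLc c f₂ →
        (∫ x, |Aop c f₁ x - Aop c f₂ x|) ≤ L * ∫ x, |f₁ x - f₂ x| := by
  have hε0 : (0:ℝ) < Real.exp (-(4*c)) := Real.exp_pos _
  set ε := Real.exp (-(4*c)) with hεdef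
  refine ⟨2*c + 2*c + 4*c/ε^2 + 2*c/ε + 2*c/ε + 2*c/ε^2, ?_, ?_⟩
  · have h1 : 0 < ε^2 := pow_pos hε0 2
    have h2 : 0 < 4*c/ε^2 := div_pos (by linarith) h1
    have h3 : 0 < 2*c/ε := div_pos (by linarith) hε0
    have h4 : 0 < 2*c/ε^2 := div_pos (by linarith) h1
    linarith
  intro f₁ hf₁ f₂ hf₂
  obtain ⟨h1i, h1z, h1nn, h1lb, h1ub⟩ := hf₁
  obtain ⟨h2i, h2z, h2nn, h2lb, h2ub⟩ := hf₂
  -- basic pointwise bound for the multiplier `min · (2c)`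
  have hmb : ∀ (f : ℝ → ℝ), (∀ y, y < 0 → f y = 0) →
      ∀ t, |min t (2*c) * f t| ≤ 2*c * |f t| := by
    intro f hz t
    rcases lt_or_ge t 0 with h | h
    · simp [hz t h]
    · rw [abs_mul, abs_of_nonneg (le_min h (by linarith))]
      exact mul_le_mul_of_nonneg_right (min_le_right _ _) (abs_nonneg _)
  have hmint : ∀ (f : ℝ → ℝ), Integrable f → (∀ y, y < 0 → f y = 0) →
      Integrable (fun t => min t (2*c) * f t) := by
    intro f hfi hz
    refine Integrable.mono' (hfi.abs.const_mul (2*c))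
      (((continuous_id.min continuous_const).aestronglyMeasurable).mul hfi.aestronglyMeasurable)
      (Filter.Eventually.of_forall fun t => ?_)
    rw [Real.norm_eq_abs]; exact hmb f hz t
  -- set integrals over `Ioi 0` are full integrals
  have hIeq : ∀ (f : ℝ → ℝ), (∀ y, y < 0 → f y = 0) →
      (∫ x in Set.Ioi (0:ℝ), f x) = ∫ x, f x := by
    intro f hz
    rw [← MeasureTheory.integral_Ici_eq_integral_Ioi]
    exact setIntegral_eq_integral_of_forall_compl_eq_zero
      (fun x hx => hz x (not_le.mp (by simpa [Set.mem_Ici] using hx)))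
  have hMeq : ∀ (f : ℝ → ℝ), (∀ y, y < 0 → f y = 0) →
      (∫ x in Set.Ioi (0:ℝ), min x (2*c) * f x) = ∫ x, min x (2*c) * f x := by
    intro f hz
    refine setIntegral_eq_integral_of_forall_compl_eq_zero (fun x hx => ?_)
    have hx0 : x ≤ 0 := not_lt.mp (by simpa [Set.mem_Ioi] using hx)
    rcases lt_or_eq_of_le hx0 with h | h
    · simp [hz x h]
    · rw [h]
      simp [min_eq_left (by linarith : (0:ℝ) ≤ 2*c)]
  set g1 : ℝ → ℝ := fun t => min t (2*c) * f₁ t with hg1d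
  set g2 : ℝ → ℝ := fun t => min t (2*c) * f₂ t with hg2d
  set fd : ℝ → ℝ := fun t => f₁ t - f₂ t with hfdd
  set gd : ℝ → ℝ := fun t => min t (2*c) * fd t with hgdd
  have hfdi : Integrable fd := h1i.sub h2i
  have hfdz : ∀ y, y < 0 → fd y = 0 := fun y hy => by simp [hfdd, h1z y hy, h2z y hy]
  have hg1i : Integrable g1 := hmint f₁ h1i h1z
  have hg2i : Integrable g2 := hmint f₂ h2i h2z
  have hgdi : Integrable gd := hmint fd hfdi hfdz
  have hg2z : ∀ y, y < 0 → g2 y = 0 := fun y hy => by simp [hg2d, h2z y hy]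
  have hgdz : ∀ y, y < 0 → gd y = 0 := fun y hy => by simp [hgdd, hfdz y hy]
  set I1 := ∫ x, f₁ x with hI1d
  set I2 := ∫ x, f₂ x with hI2d
  set M1 := ∫ x, g1 x with hM1d
  set M2 := ∫ x, g2 x with hM2d
  set Δ := ∫ x, |f₁ x - f₂ x| with hΔd
  have hΔ0 : 0 ≤ Δ := integral_nonneg fun x => abs_nonneg _
  have hI1lb : ε ≤ I1 := by rw [hI1d, ← hIeq f₁ h1z]; exact h1lb
  have hI1ub : I1 ≤ 1 := by rw [hI1d, ← hIeq f₁ h1z]; exact h1ub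
  have hI2lb : ε ≤ I2 := by rw [hI2d, ← hIeq f₂ h2z]; exact h2lb
  have hI2ub : I2 ≤ 1 := by rw [hI2d, ← hIeq f₂ h2z]; exact h2ub
  have hI1pos : 0 < I1 := lt_of_lt_of_le hε0 hI1lb
  have hI2pos : 0 < I2 := lt_of_lt_of_le hε0 hI2lb
  have habs1 : ∫ x, |f₁ x| = I1 := by
    rw [hI1d]; exact integral_congr_ae (h1nn.mono fun x hx => abs_of_nonneg hx)
  have habs2 : ∫ x, |f₂ x| = I2 := by
    rw [hI2d]; exact integral_congr_ae (h2nn.mono fun x hx => abs_of_nonneg hx)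
  have habsd : ∫ x, |fd x| = Δ := by rw [hΔd]
  have hgd_abs : ∫ x, |gd x| ≤ 2*c*Δ := by
    calc ∫ x, |gd x| ≤ ∫ x, 2*c*|fd x| :=
        integral_mono hgdi.abs (hfdi.abs.const_mul _)
          (fun x => by simpa [hgdd] using hmb fd hfdz x)
      _ = 2*c*Δ := by rw [integral_const_mul, habsd]
  have hIsub : |I1 - I2| ≤ Δ := by
    rw [hI1d, hI2d, ← integral_sub h1i h2i]
    calc |∫ x, (f₁ x - f₂ x)| ≤ ∫ x, |f₁ x - f₂ x| := by
          simpa [Real.norm_eq_abs] using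
            norm_integral_le_integral_norm (μ := volume) (fun x => f₁ x - f₂ x)
      _ = Δ := hΔd.symm
  have hMsub : |M1 - M2| ≤ 2*c*Δ := by
    rw [hM1d, hM2d, ← integral_sub hg1i hg2i]
    have he : (fun x => g1 x - g2 x) = gd := by
      funext t; simp only [hg1d, hg2d, hgdd, hfdd]; ring
    rw [he]
    calc |∫ x, gd x| ≤ ∫ x, |gd x| := by
          simpa [Real.norm_eq_abs] using norm_integral_le_integral_norm (μ := volume) gd
      _ ≤ 2*c*Δ := hgd_abs
  have hM1nn : 0 ≤ M1 := by
    rw [hM1d]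
    refine integral_nonneg_of_ae (h1nn.mono fun x hx => ?_)
    simp only [hg1d]
    rcases lt_or_ge x 0 with h | h
    · simp [h1z x h]
    · exact mul_nonneg (le_min h (by linarith)) hx
  have hM2nn : 0 ≤ M2 := by
    rw [hM2d]
    refine integral_nonneg_of_ae (h2nn.mono fun x hx => ?_)
    simp only [hg2d]
    rcases lt_or_ge x 0 with h | h
    · simp [h2z x h]
    · exact mul_nonneg (le_min h (by linarith)) hx
  have hM1ub : M1 ≤ 2*c*I1 := by
    rw [hM1d, hI1d, ← integral_const_mul]
    refine integral_mono_ae hg1i (h1i.const_mul _) (h1nn.mono fun x hx => ?_)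
    simp only [hg1d]
    rcases lt_or_ge x 0 with h | h
    · simp [h1z x h]
    · exact mul_le_mul_of_nonneg_right (min_le_right _ _) hx
  have hM2ub : M2 ≤ 2*c*I2 := by
    rw [hM2d, hI2d, ← integral_const_mul]
    refine integral_mono_ae hg2i (h2i.const_mul _) (h2nn.mono fun x hx => ?_)
    simp only [hg2d]
    rcases lt_or_ge x 0 with h | h
    · simp [h2z x h]
    · exact mul_le_mul_of_nonneg_right (min_le_right _ _) hx
  have hg2abs : ∫ x, |g2 x| ≤ 2*c := by
    calc ∫ x, |g2 x| ≤ ∫ x, 2*c*|f₂ x| :=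
        integral_mono hg2i.abs (h2i.abs.const_mul _)
          (fun x => by simpa [hg2d] using hmb f₂ h2z x)
      _ = 2*c*I2 := by rw [integral_const_mul, habs2]
      _ ≤ 2*c := by nlinarith
  set E : ℝ → ℝ := fun x =>
    -(gd x) + (-(M1/I1) * fd x) + (-(M1/I1 - M2/I2) * f₂ x)
      + cnv gd f₁ x / I1 + cnv g2 fd x / I1 + (1/I1 - 1/I2) * cnv g2 f₂ x with hEd
  have hAE : ∀ᵐ x : ℝ, Aop c f₁ x - Aop c f₂ x = E x := by
    filter_upwards [aeConv hg1i h1i, aeConv hg2i h1i, aeConv hg2i h2i,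
      aeConv hgdi h1i, aeConv hg2i hfdi] with x hx1 hx2 hx3 hx4 hx5
    rcases lt_or_ge x 0 with hx | hx
    · have e1 : cnv gd f₁ x = 0 := cnv_zero_of_neg hgdz h1z hx
      have e2 : cnv g2 fd x = 0 := cnv_zero_of_neg hg2z hfdz hx
      have e3 : cnv g2 f₂ x = 0 := cnv_zero_of_neg hg2z h2z hx
      simp only [hEd, e1, e2, e3]
      simp [Aop, hx, hgdd, hfdd, h1z x hx, h2z x hx]
    · have hnx : ¬ x < 0 := not_lt.mpr hx
      have hC1 : (∫ x' in (0:ℝ)..x, min x' (2*c) * f₁ x' * f₁ (x - x')) = cnv g1 f₁ x := by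
        have hv : ∀ t, t ∉ Set.Ioc (0:ℝ) x → min t (2*c) * f₁ t * f₁ (x - t) = 0 := by
          intro t ht
          simp only [Set.mem_Ioc, not_and_or, not_lt, not_le] at ht
          rcases ht with h | h
          · rcases lt_or_eq_of_le h with h' | h'
            · simp [h1z t h']
            · subst h'
              simp [hc.le]
          · simp [h1z (x - t) (by linarith)]
        rw [intervalIntegral.integral_of_le hx,
          setIntegral_eq_integral_of_forall_compl_eq_zero hv, cnv_apply]
      have hC2 : (∫ x' in (0:ℝ)..x, min x' (2*c) * f₂ x' * f₂ (x - x')) = cnv g2 f₂ x := by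
        have hv : ∀ t, t ∉ Set.Ioc (0:ℝ) x → min t (2*c) * f₂ t * f₂ (x - t) = 0 := by
          intro t ht
          simp only [Set.mem_Ioc, not_and_or, not_lt, not_le] at ht
          rcases ht with h | h
          · rcases lt_or_eq_of_le h with h' | h'
            · simp [h2z t h']
            · subst h'
              simp [hc.le]
          · simp [h2z (x - t) (by linarith)]
        rw [intervalIntegral.integral_of_le hx,
          setIntegral_eq_integral_of_forall_compl_eq_zero hv, cnv_apply]
      have hs1 : cnv g1 f₁ x = cnv gd f₁ x + cnv g2 f₁ x := by
        rw [cnv_apply, cnv_apply, cnv_apply, ← integral_add hx4 hx2]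
        congr 1; funext t; simp only [hgdd, hg2d, hg1d, hfdd]; ring
      have hs2 : cnv g2 f₁ x = cnv g2 f₂ x + cnv g2 fd x := by
        rw [cnv_apply, cnv_apply, cnv_apply, ← integral_add hx3 hx5]
        congr 1; funext t; simp only [hg2d, hfdd]; ring
      simp only [Aop]
      rw [if_neg hnx, if_neg hnx, hIeq f₁ h1z, hIeq f₂ h2z, hMeq f₁ h1z, hMeq f₂ h2z,
        hC1, hC2, hs1, hs2]
      simp only [hEd, hg1d, hg2d, hgdd, hfdd, hM1d, hM2d, hI1d, hI2d]
      ring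
  have hcgd : Integrable (cnv gd f₁) := cnv_integrable hgdi h1i
  have hcg2fd : Integrable (cnv g2 fd) := cnv_integrable hg2i hfdi
  have hcg2f2 : Integrable (cnv g2 f₂) := cnv_integrable hg2i h2i
  have it1 : Integrable (fun x => -(gd x)) := hgdi.neg
  have it2 : Integrable (fun x => -(M1/I1) * fd x) := hfdi.const_mul _
  have it3 : Integrable (fun x => -(M1/I1 - M2/I2) * f₂ x) := h2i.const_mul _
  have it4 : Integrable (fun x => cnv gd f₁ x / I1) := hcgd.div_const _
  have it5 : Integrable (fun x => cnv g2 fd x / I1) := hcg2fd.div_const _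
  have it6 : Integrable (fun x => (1/I1 - 1/I2) * cnv g2 f₂ x) := hcg2f2.const_mul _
  have step1 : ∫ x, |Aop c f₁ x - Aop c f₂ x| = ∫ x, |E x| :=
    integral_congr_ae (hAE.mono fun x hx => by change |Aop c f₁ x - Aop c f₂ x| = |E x|; rw [hx])
  have hsum : ∫ x, |E x| ≤ (∫ x, |(-(gd x))|) + (∫ x, |(-(M1/I1) * fd x)|)
      + (∫ x, |(-(M1/I1 - M2/I2) * f₂ x)|) + (∫ x, |cnv gd f₁ x / I1|)
      + (∫ x, |cnv g2 fd x / I1|) + (∫ x, |(1/I1 - 1/I2) * cnv g2 f₂ x|) := by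
    simp only [hEd]
    exact int_abs_add6 it1 it2 it3 it4 it5 it6
  clear_value g1 g2 fd gd I1 I2 M1 M2 Δ E ε
  have hgdnn : 0 ≤ ∫ x, |gd x| := integral_nonneg fun x => abs_nonneg _
  have hg2nn : 0 ≤ ∫ x, |g2 x| := integral_nonneg fun x => abs_nonneg _
  have hden : ε^2 ≤ |I1 * I2| := by
    rw [abs_of_nonneg (mul_nonneg hI1pos.le hI2pos.le)]
    calc ε^2 = ε*ε := sq ε
      _ ≤ I1*I2 := mul_le_mul hI1lb hI2lb hε0.le (le_trans hε0.le hI1lb)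
  have B1 : ∫ x, |(-(gd x))| ≤ 2*c*Δ := by
    calc ∫ x, |(-(gd x))| = ∫ x, |gd x| := by simp only [abs_neg]
      _ ≤ 2*c*Δ := hgd_abs
  have B2 : ∫ x, |(-(M1/I1) * fd x)| ≤ 2*c*Δ := by
    have heq : ∫ x, |(-(M1/I1) * fd x)| = (M1/I1) * Δ := by
      rw [← habsd, ← integral_const_mul]
      congr 1; funext x
      rw [abs_mul, abs_neg, abs_of_nonneg (div_nonneg hM1nn hI1pos.le)]
    rw [heq]
    have hM1I1 : M1/I1 ≤ 2*c := by rw [div_le_iff₀ hI1pos]; nlinarith [hM1ub]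
    exact mul_le_mul_of_nonneg_right hM1I1 hΔ0
  have B3 : ∫ x, |(-(M1/I1 - M2/I2) * f₂ x)| ≤ 4*c/ε^2*Δ := by
    have heq : ∫ x, |(-(M1/I1 - M2/I2) * f₂ x)| = |M1/I1 - M2/I2| * I2 := by
      rw [← habs2, ← integral_const_mul]
      congr 1; funext x
      rw [abs_mul, abs_neg]
    rw [heq]
    have hd : |M1/I1 - M2/I2| ≤ 4*c/ε^2 * Δ := by
      rw [div_sub_div _ _ hI1pos.ne' hI2pos.ne', abs_div]
      have hnum : |M1 * I2 - I1 * M2| ≤ 4*c*Δ := by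
        have e : M1 * I2 - I1 * M2 = (M1 - M2)*I2 + M2*(I2 - I1) := by ring
        rw [e]
        have h1 : |(M1 - M2)*I2| ≤ 2*c*Δ := by
          rw [abs_mul, abs_of_nonneg hI2pos.le]
          nlinarith [hMsub, hI2ub, abs_nonneg (M1 - M2)]
        have h2 : |M2*(I2 - I1)| ≤ 2*c*Δ := by
          rw [abs_mul, abs_of_nonneg hM2nn, abs_sub_comm]
          nlinarith [hM2ub, hI2ub, hIsub, hM2nn, abs_nonneg (I1 - I2), hΔ0, hc]
        calc |(M1 - M2)*I2 + M2*(I2 - I1)| ≤ |(M1 - M2)*I2| + |M2*(I2 - I1)| := abs_add_le _ _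
          _ ≤ 4*c*Δ := by linarith
      calc |M1 * I2 - I1 * M2| / |I1 * I2| ≤ (4*c*Δ)/ε^2 :=
          div_le_div₀ (mul_nonneg (by linarith) hΔ0) hnum (pow_pos hε0 2) hden
        _ = 4*c/ε^2 * Δ := by ring
    calc |M1/I1 - M2/I2| * I2 ≤ |M1/I1 - M2/I2| := by
          nlinarith [abs_nonneg (M1/I1 - M2/I2), hI2ub, hI2pos.le]
      _ ≤ 4*c/ε^2 * Δ := hd
  have B4 : ∫ x, |cnv gd f₁ x / I1| ≤ 2*c/ε*Δ := by
    have heq : ∫ x, |cnv gd f₁ x / I1| = (∫ x, |cnv gd f₁ x|) / I1 := by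
      rw [← integral_div]
      congr 1; funext x
      rw [abs_div, abs_of_nonneg hI1pos.le]
    rw [heq]
    have h1 : ∫ x, |cnv gd f₁ x| ≤ 2*c*Δ := by
      have hl := cnv_l1 hgdi h1i
      rw [habs1] at hl
      nlinarith [hgd_abs, hI1ub, hI1pos, hgdnn]
    calc (∫ x, |cnv gd f₁ x|)/I1 ≤ (2*c*Δ)/ε :=
        div_le_div₀ (mul_nonneg (by linarith) hΔ0) h1 hε0 hI1lb
      _ = 2*c/ε*Δ := by ring
  have B5 : ∫ x, |cnv g2 fd x / I1| ≤ 2*c/ε*Δ := by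
    have heq : ∫ x, |cnv g2 fd x / I1| = (∫ x, |cnv g2 fd x|) / I1 := by
      rw [← integral_div]
      congr 1; funext x
      rw [abs_div, abs_of_nonneg hI1pos.le]
    rw [heq]
    have h1 : ∫ x, |cnv g2 fd x| ≤ 2*c*Δ := by
      have hl := cnv_l1 hg2i hfdi
      rw [habsd] at hl
      nlinarith [hg2abs, hΔ0, hg2nn]
    calc (∫ x, |cnv g2 fd x|)/I1 ≤ (2*c*Δ)/ε :=
        div_le_div₀ (mul_nonneg (by linarith) hΔ0) h1 hε0 hI1lb
      _ = 2*c/ε*Δ := by ring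
  have B6 : ∫ x, |(1/I1 - 1/I2) * cnv g2 f₂ x| ≤ 2*c/ε^2*Δ := by
    have heq : ∫ x, |(1/I1 - 1/I2) * cnv g2 f₂ x| = |1/I1 - 1/I2| * ∫ x, |cnv g2 f₂ x| := by
      rw [← integral_const_mul]
      congr 1; funext x
      rw [abs_mul]
    rw [heq]
    have h1 : ∫ x, |cnv g2 f₂ x| ≤ 2*c := by
      have hl := cnv_l1 hg2i h2i
      rw [habs2] at hl
      nlinarith [hg2abs, hI2ub, hI2pos, hg2nn]
    have h3 : |1/I1 - 1/I2| ≤ Δ/ε^2 := by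
      rw [div_sub_div _ _ hI1pos.ne' hI2pos.ne', one_mul, mul_one, abs_div]
      have hnum : |I2 - I1| ≤ Δ := by rw [abs_sub_comm]; exact hIsub
      exact div_le_div₀ hΔ0 hnum (pow_pos hε0 2) hden
    calc |1/I1 - 1/I2| * ∫ x, |cnv g2 f₂ x| ≤ (Δ/ε^2) * (2*c) :=
        mul_le_mul h3 h1 (integral_nonneg fun x => abs_nonneg _)
          (div_nonneg hΔ0 (pow_pos hε0 2).le)
      _ = 2*c/ε^2*Δ := by ring
  rw [step1]
  have hL : (2*c + 2*c + 4*c/ε^2 + 2*c/ε + 2*c/ε + 2*c/ε^2) * Δ =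
      2*c*Δ + 2*c*Δ + 4*c/ε^2*Δ + 2*c/ε*Δ + 2*c/ε*Δ + 2*c/ε^2*Δ := by ring
  linarith [hsum, B1, B2, B3, B4, B5, B6]
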